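/- Let n ≥ 1 and r ∈ (0,1). Let T_n be the n×n lower-triangular Toeplitz matrix defined by (T_n)_{ij} = 0 for i < j, (T_n)_{ii} = −r, and (T_n)_{ij} = (1−r²)·r^{i−j−1} for i > j. Then ‖T_n‖ ≤ 1, the spectrum of T_n equals {−r}, and ‖(−I − T_n)^{-1}‖ ≥ (n(1+r) + 1 − r)/(2(1−r)). -/

import Mathlib

/-!
With `S` the lower shift matrix, `T (1 - r S) = S - r`, so `T = (S - r)(1 - r S)⁻¹` is a Möbius
transform of a contraction. Writing `v = (1 - r S) w`, the identity
`‖w - r S w‖² - ‖S w - r w‖² = (1 - r²)(‖w‖² - ‖S w‖²) ≥ 0` gives `‖T v‖ ≤ ‖v‖`.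
`T` is lower triangular with constant diagonal `-r`, which gives the spectrum.
For the resolvent, `(-1 - T)(1 - r S) = (r - 1)(1 + S)`. With `ε = ((-1)ⁱ)` and
`y = ((-1)ⁱ (i + 1))`, which solves `(1 + S) y = ε`, this gives
`(-1 - T)⁻¹ ((r - 1) ε) = (1 - r S) y`, whose pairing with `ε` is `n (n (1 + r) + 1 - r) / 2`;
by Cauchy–Schwarz it is at most `‖(-1 - T)⁻¹‖ ‖(r - 1) ε‖ ‖ε‖ = ‖(-1 - T)⁻¹‖ (1 - r) n`.
-/

/-- The operator norm of a complex `n × n` matrix induced by the Euclidean norm on `ℂⁿ`. -/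
noncomputable def matNorm {n : ℕ} (T : Matrix (Fin n) (Fin n) ℂ) : ℝ :=
  ‖Matrix.toEuclideanCLM (𝕜 := ℂ) T‖

/-- The `n × n` lower-triangular Toeplitz matrix with `-r` on the diagonal and
`(1 - r²)·r^(i - j - 1)` below the diagonal. -/
noncomputable def Tmat (n : ℕ) (r : ℝ) : Matrix (Fin n) (Fin n) ℂ :=
  Matrix.of fun i j =>
    if (i : ℕ) < (j : ℕ) then 0
    else if (i : ℕ) = (j : ℕ) then (-r : ℂ)
    else ((1 : ℂ) - (r : ℂ) ^ 2) * (r : ℂ) ^ ((i : ℕ) - (j : ℕ) - 1)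

open Matrix WithLp

section Contraction

variable {𝕜 E : Type*} [RCLike 𝕜] [NormedAddCommGroup E] [InnerProductSpace 𝕜 E]

lemma norm_sub_smul_sq_sub_norm_sub_smul_sq (r : ℝ) (a b : E) :
    ‖a - (r : 𝕜) • b‖ ^ 2 - ‖b - (r : 𝕜) • a‖ ^ 2 = (1 - r ^ 2) * (‖a‖ ^ 2 - ‖b‖ ^ 2) := by
  rw [@norm_sub_sq 𝕜, @norm_sub_sq 𝕜, inner_smul_right, inner_smul_right, norm_smul, norm_smul,
    ← inner_conj_symm b a, RCLike.re_ofReal_mul, RCLike.re_ofReal_mul, RCLike.conj_re,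
    RCLike.norm_ofReal, mul_pow, mul_pow, sq_abs]
  ring

lemma norm_sub_smul_le_norm_sub_smul {r : ℝ} (hr : |r| ≤ 1) {a b : E} (hab : ‖a‖ ≤ ‖b‖) :
    ‖a - (r : 𝕜) • b‖ ≤ ‖b - (r : 𝕜) • a‖ := by
  have hr2 : 0 ≤ 1 - r ^ 2 := by nlinarith [sq_abs r, abs_nonneg r]
  have key := norm_sub_smul_sq_sub_norm_sub_smul_sq (𝕜 := 𝕜) r b a
  refine (pow_le_pow_iff_left₀ (norm_nonneg _) (norm_nonneg _) two_ne_zero).mp ?_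
  nlinarith [mul_nonneg hr2 (sub_nonneg.2 (pow_le_pow_left₀ (norm_nonneg a) hab 2))]

lemma norm_le_one_of_mul_one_sub_smul_eq [CompleteSpace E] {S T : E →L[𝕜] E} (hS : ‖S‖ ≤ 1)
    {r : ℝ} (hr : |r| < 1) (hT : T * (1 - (r : 𝕜) • S) = S - (r : 𝕜) • 1) : ‖T‖ ≤ 1 := by
  have hrS : ‖(r : 𝕜) • S‖ < 1 := by
    calc ‖(r : 𝕜) • S‖ ≤ |r| * ‖S‖ := by rw [norm_smul, RCLike.norm_ofReal]
      _ ≤ |r| := mul_le_of_le_one_right (abs_nonneg r) hS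
      _ < 1 := hr
  obtain ⟨U, hU⟩ := (isUnit_one_sub_of_norm_lt_one hrS).exists_right_inv
  refine ContinuousLinearMap.opNorm_le_bound _ zero_le_one fun v => ?_
  obtain ⟨w, rfl⟩ : ∃ w, (1 - (r : 𝕜) • S) w = v := ⟨U v, by rw [← mul_apply_eq_comp, hU]; rfl⟩
  have hTw : T ((1 - (r : 𝕜) • S) w) = S w - (r : 𝕜) • w := by
    rw [← mul_apply_eq_comp, hT]; rfl
  rw [hTw, one_mul]
  exact norm_sub_smul_le_norm_sub_smul hr.le (by simpa using S.le_of_opNorm_le hS w)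

end Contraction

def shiftMatrix (R : Type*) [Zero R] [One R] (n : ℕ) : Matrix (Fin n) (Fin n) R :=
  Matrix.of fun i j => if (i : ℕ) = j + 1 then 1 else 0

section Shift

variable {R : Type*} [NonAssocSemiring R] {n : ℕ}

lemma shiftMatrix_mulVec_apply (v : Fin n → R) (i : Fin n) :
    (shiftMatrix R n *ᵥ v) i = if h : (i : ℕ) = 0 then 0 else v ⟨i - 1, by omega⟩ := by
  rw [mulVec, dotProduct]
  split_ifs with h
  · refine Finset.sum_eq_zero fun j _ => ?_
    simp [shiftMatrix, h]
  · rw [Finset.sum_eq_single ⟨i - 1, by omega⟩]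
    · simp only [shiftMatrix, of_apply, ite_mul, one_mul, zero_mul, ite_eq_left_iff]
      omega
    · intro j _ hj
      have : (i : ℕ) ≠ j + 1 := fun h' => hj (Fin.ext (by simp only; omega))
      simp [shiftMatrix, this]
    · simp

lemma mul_shiftMatrix_apply (A : Matrix (Fin n) (Fin n) R) (i j : Fin n) :
    (A * shiftMatrix R n) i j = if h : (j : ℕ) + 1 < n then A i ⟨j + 1, h⟩ else 0 := by
  rw [mul_apply]
  split_ifs with h
  · rw [Finset.sum_eq_single ⟨j + 1, h⟩]
    · simp [shiftMatrix]
    · intro k _ hk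
      have : (k : ℕ) ≠ j + 1 := fun h' => hk (Fin.ext h')
      simp [shiftMatrix, this]
    · simp
  · refine Finset.sum_eq_zero fun k _ => ?_
    have : (k : ℕ) ≠ j + 1 := by omega
    simp [shiftMatrix, this]

lemma shiftMatrix_mulVec_zero {m : ℕ} (v : Fin (m + 1) → R) :
    (shiftMatrix R (m + 1) *ᵥ v) 0 = 0 := by
  rw [shiftMatrix_mulVec_apply]
  exact dif_pos rfl

lemma shiftMatrix_mulVec_succ {m : ℕ} (v : Fin (m + 1) → R) (i : Fin m) :
    (shiftMatrix R (m + 1) *ᵥ v) i.succ = v i.castSucc := by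
  rw [shiftMatrix_mulVec_apply]
  exact dif_neg (Nat.succ_ne_zero i)

end Shift

lemma norm_toEuclideanCLM_shiftMatrix_le {𝕜 : Type*} [RCLike 𝕜] (n : ℕ) :
    ‖toEuclideanCLM (𝕜 := 𝕜) (shiftMatrix 𝕜 n)‖ ≤ 1 := by
  refine ContinuousLinearMap.opNorm_le_bound _ zero_le_one fun v => ?_
  rw [one_mul, EuclideanSpace.norm_eq, EuclideanSpace.norm_eq]
  refine Real.sqrt_le_sqrt ?_
  rw [ofLp_toEuclideanCLM]
  cases n with
  | zero => simp
  | succ m =>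
    rw [Fin.sum_univ_succ, Fin.sum_univ_castSucc]
    simp only [shiftMatrix_mulVec_zero, shiftMatrix_mulVec_succ, norm_zero,
      zero_pow two_ne_zero, zero_add]
    exact le_add_of_nonneg_right (sq_nonneg _)

lemma Tmat_mul_one_sub_smul_shiftMatrix (n : ℕ) (r : ℝ) :
    Tmat n r * (1 - (r : ℂ) • shiftMatrix ℂ n) = shiftMatrix ℂ n - (r : ℂ) • 1 := by
  ext i j
  rw [mul_sub, mul_one, mul_smul_comm, Matrix.sub_apply, Matrix.smul_apply, mul_shiftMatrix_apply,
    Matrix.sub_apply, Matrix.smul_apply]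
  simp only [Tmat, shiftMatrix, of_apply, one_apply, Fin.ext_iff]
  split_ifs <;> simp only [smul_eq_mul] <;> first
    | omega
    | (rw [show (i : ℕ) - j - 1 = 0 by omega]; ring)
    | (rw [show (i : ℕ) - j - 1 = (i - (j + 1) - 1) + 1 by omega]; ring)
    | ring

lemma matNorm_Tmat_le_one (n : ℕ) {r : ℝ} (hr : |r| < 1) : matNorm (Tmat n r) ≤ 1 :=
  norm_le_one_of_mul_one_sub_smul_eq (norm_toEuclideanCLM_shiftMatrix_le n) hr <| by
    have h := congrArg (Matrix.toEuclideanCLM (𝕜 := ℂ)) (Tmat_mul_one_sub_smul_shiftMatrix n r)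
    rwa [map_mul, map_sub, map_smul, map_sub, map_smul, map_one] at h

lemma isLowerTriangular_Tmat (n : ℕ) (r : ℝ) : (Tmat n r).IsLowerTriangular := by
  intro i j hij
  have : (i : ℕ) < j := hij
  simp only [Tmat, of_apply, if_pos this]

lemma det_algebraMap_sub_Tmat (n : ℕ) (r : ℝ) (μ : ℂ) :
    (algebraMap ℂ (Matrix (Fin n) (Fin n) ℂ) μ - Tmat n r).det = (μ + r) ^ n := by
  rw [det_of_isLowerTriangular _ ((blockTriangular_algebraMap μ).sub (isLowerTriangular_Tmat n r))]
  simp [Tmat, algebraMap_eq_diagonal, sub_neg_eq_add]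

lemma isUnit_algebraMap_sub_Tmat_iff (n : ℕ) (r : ℝ) (μ : ℂ) :
    IsUnit (algebraMap ℂ (Matrix (Fin n) (Fin n) ℂ) μ - Tmat n r) ↔ (μ + r) ^ n ≠ 0 := by
  rw [isUnit_iff_isUnit_det, det_algebraMap_sub_Tmat, isUnit_iff_ne_zero]

lemma spectrum_Tmat {n : ℕ} (hn : n ≠ 0) (r : ℝ) : spectrum ℂ (Tmat n r) = {(-r : ℂ)} := by
  ext μ
  rw [spectrum.mem_iff, isUnit_algebraMap_sub_Tmat_iff, not_not, pow_eq_zero_iff hn,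
    add_eq_zero_iff_eq_neg, Set.mem_singleton_iff]

lemma isUnit_neg_one_sub_Tmat (n : ℕ) {r : ℝ} (hr : r ≠ 1) :
    IsUnit (-(1 : Matrix (Fin n) (Fin n) ℂ) - Tmat n r) := by
  have h := (isUnit_algebraMap_sub_Tmat_iff n r (-1)).mpr
  rw [map_neg, map_one] at h
  refine h (pow_ne_zero _ fun h0 => hr ?_)
  exact_mod_cast (neg_add_eq_zero.mp h0).symm

lemma norm_mulVec_dotProduct_star_le {𝕜 ι : Type*} [RCLike 𝕜] [Fintype ι] [DecidableEq ι]
    (A : Matrix ι ι 𝕜) (x y : ι → 𝕜) :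
    ‖A *ᵥ x ⬝ᵥ star y‖ ≤
      ‖Matrix.toEuclideanCLM (𝕜 := 𝕜) A‖ * ‖toLp 2 x‖ * ‖toLp 2 y‖ := by
  calc ‖A *ᵥ x ⬝ᵥ star y‖
      = ‖inner 𝕜 (toLp 2 y) (Matrix.toEuclideanCLM (𝕜 := 𝕜) A (toLp 2 x))‖ := rfl
    _ ≤ ‖toLp 2 y‖ * ‖Matrix.toEuclideanCLM (𝕜 := 𝕜) A (toLp 2 x)‖ :=
      norm_inner_le_norm _ _
    _ ≤ ‖toLp 2 y‖ * (‖Matrix.toEuclideanCLM (𝕜 := 𝕜) A‖ * ‖toLp 2 x‖) := by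
      gcongr; exact ContinuousLinearMap.le_opNorm _ _
    _ = _ := by ring

def alternatingVec (n : ℕ) : Fin n → ℂ := fun i => (-1) ^ (i : ℕ)

lemma star_alternatingVec (n : ℕ) : star (alternatingVec n) = alternatingVec n := by
  ext i; simp [alternatingVec]

lemma norm_toLp_alternatingVec (n : ℕ) : ‖toLp 2 (alternatingVec n)‖ = Real.sqrt n := by
  simp [EuclideanSpace.norm_eq, alternatingVec]

def alternatingRampVec (n : ℕ) : Fin n → ℂ := fun i => ((i : ℕ) + 1 : ℂ) * alternatingVec n i

lemma one_add_shiftMatrix_mulVec_alternatingRampVec (n : ℕ) :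
    (1 + shiftMatrix ℂ n) *ᵥ alternatingRampVec n = alternatingVec n := by
  ext i
  rw [add_mulVec, one_mulVec, Pi.add_apply, shiftMatrix_mulVec_apply]
  obtain ⟨i, hi⟩ := i
  cases i with
  | zero => simp [alternatingRampVec, alternatingVec]
  | succ k =>
    simp only [alternatingRampVec, alternatingVec, dif_neg (Nat.succ_ne_zero k), Nat.add_sub_cancel]
    push_cast
    ring

lemma two_mul_sum_range_mul_add_one {R : Type*} [CommRing R] (a : R) (n : ℕ) :
    2 * ∑ i ∈ Finset.range n, (a * i + 1) = n * (n * a + 2 - a) := by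
  induction n with
  | zero => simp
  | succ k ih => rw [Finset.sum_range_succ, mul_add, ih]; push_cast; ring

lemma one_sub_smul_shiftMatrix_mulVec_alternatingRampVec_dotProduct (n : ℕ) (r : ℂ) :
    (1 - r • shiftMatrix ℂ n) *ᵥ alternatingRampVec n ⬝ᵥ
      alternatingVec n = n * (n * (1 + r) + 1 - r) / 2 := by
  have hterm : ∀ i : Fin n, ((1 - r • shiftMatrix ℂ n) *ᵥ
      alternatingRampVec n) i * alternatingVec n i = (1 + r) * (i : ℕ) + 1 := by
    rintro ⟨i, hi⟩
    rw [sub_mulVec, one_mulVec, smul_mulVec, Pi.sub_apply, Pi.smul_apply, shiftMatrix_mulVec_apply]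
    cases i with
    | zero => simp [alternatingRampVec, alternatingVec]
    | succ k =>
      simp only [alternatingRampVec, alternatingVec, Nat.add_sub_cancel,
        dif_neg (Nat.succ_ne_zero k), smul_eq_mul]
      push_cast
      have hsq : ((-1 : ℂ) ^ k) ^ 2 = 1 := by rw [← pow_mul, mul_comm, pow_mul]; norm_num
      rw [pow_succ]
      linear_combination ((k : ℂ) + 2 + r * (k + 1)) * hsq
  rw [dotProduct, Finset.sum_congr rfl fun i _ => hterm i,
    Fin.sum_univ_eq_sum_range (fun i => (1 + r) * (i : ℂ) + 1), eq_div_iff two_ne_zero, mul_comm,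
    two_mul_sum_range_mul_add_one]
  ring

lemma div_le_matNorm_inv_neg_one_sub_Tmat {n : ℕ} (hn : 0 < n) {r : ℝ} (hr : r < 1) :
    (n * (1 + r) + 1 - r) / (2 * (1 - r)) ≤
      matNorm (-(1 : Matrix (Fin n) (Fin n) ℂ) - Tmat n r)⁻¹ := by
  set B := -(1 : Matrix (Fin n) (Fin n) ℂ) - Tmat n r
  set M := 1 - (r : ℂ) • shiftMatrix ℂ n
  have hB : IsUnit B.det := (isUnit_iff_isUnit_det B).mp (isUnit_neg_one_sub_Tmat n hr.ne)
  have hBM : B * M = ((r : ℂ) - 1) • (1 + shiftMatrix ℂ n) := by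
    rw [sub_mul, neg_mul, one_mul, Tmat_mul_one_sub_smul_shiftMatrix]
    module
  have hz : B⁻¹ *ᵥ (((r : ℂ) - 1) • alternatingVec n) = M *ᵥ alternatingRampVec n := by
    rw [← one_add_shiftMatrix_mulVec_alternatingRampVec n, ← smul_mulVec, ← hBM, mulVec_mulVec,
      nonsing_inv_mul_cancel_left B M hB]
  have key := norm_mulVec_dotProduct_star_le B⁻¹ (((r : ℂ) - 1) • alternatingVec n)
    (alternatingVec n)
  have hnorm : ‖(r : ℂ) - 1‖ = 1 - r := by
    rw [← Complex.ofReal_one, ← Complex.ofReal_sub, Complex.norm_real, Real.norm_eq_abs,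
      abs_of_neg (by linarith), neg_sub]
  rw [hz, star_alternatingVec, one_sub_smul_shiftMatrix_mulVec_alternatingRampVec_dotProduct,
    toLp_smul, norm_smul, norm_toLp_alternatingVec, hnorm, mul_assoc, mul_assoc,
    Real.mul_self_sqrt n.cast_nonneg] at key
  have hlhs : (n * (n * (1 + r) + 1 - r) / 2 : ℝ) ≤ ‖(n * (n * (1 + r) + 1 - r) / 2 : ℂ)‖ := by
    exact_mod_cast le_abs_self _
  have hn' : (0 : ℝ) < n := Nat.cast_pos.mpr hn
  rw [div_le_iff₀ (by linarith)]
  unfold matNorm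
  nlinarith

theorem stmt9 (n : ℕ) (hn : 1 ≤ n) (r : ℝ) (hr : r ∈ Set.Ioo (0 : ℝ) 1) :
    matNorm (Tmat n r) ≤ 1 ∧ spectrum ℂ (Tmat n r) = {(-r : ℂ)} ∧
      IsUnit (-(1 : Matrix (Fin n) (Fin n) ℂ) - Tmat n r) ∧
      (n * (1 + r) + 1 - r) / (2 * (1 - r)) ≤
        matNorm (-(1 : Matrix (Fin n) (Fin n) ℂ) - Tmat n r)⁻¹ := by
  obtain ⟨hr0, hr1⟩ := hr
  exact ⟨matNorm_Tmat_le_one n (abs_lt.mpr ⟨by linarith, hr1⟩), spectrum_Tmat (by omega) r,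
    isUnit_neg_one_sub_Tmat n hr1.ne, div_le_matNorm_inv_neg_one_sub_Tmat hn hr1⟩
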